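/- Let G be a finite weakly connected digraph with w(G) = 0 (every closed route has weight 0). Then there is a unique epimorphism φ : G → P_{d(G)}, where d(G) is the diameter of G, given by φ(q) = σ(R(p,q)) for a suitable base vertex p; this is well defined independently of the route chosen. -/

import Mathlib

/-- A route in a digraph `(V, E)` starting at a vertex `u` is encoded by a list of
steps `(s, w)` where `s = 1` means the edge is traversed forwards into `w` and
`s = -1` means it is traversed backwards. -/
def IsRoute {V : Type*} (E : V → V → Prop) : V → List (ℤ × V) → Prop
  | _, [] => True
  | u, (s, w) :: t => ((s = 1 ∧ E u w) ∨ (s = -1 ∧ E w u)) ∧ IsRoute E w t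

/-- The final vertex of a route starting at `u` with step list `l`. -/
def routeEnd {V : Type*} : V → List (ℤ × V) → V
  | u, [] => u
  | _, (_, w) :: t => routeEnd w t

/-- The weight `σ(R)` of a route: the sum of its signs. -/
def routeWeight {V : Type*} (l : List (ℤ × V)) : ℤ := (l.map Prod.fst).sum

/-- A digraph homomorphism maps arcs to arcs. -/
def IsDigraphHom {V₁ V₂ : Type*} (E₁ : V₁ → V₁ → Prop) (E₂ : V₂ → V₂ → Prop)
    (φ : V₁ → V₂) : Prop :=
  ∀ u v, E₁ u v → E₂ (φ u) (φ v)

/-- The set `W` of positive weights of closed routes in the digraph `(V, E)`. -/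
def closedWeights {V : Type*} (E : V → V → Prop) : Set ℤ :=
  {n : ℤ | 0 < n ∧ ∃ (u : V) (l : List (ℤ × V)),
    IsRoute E u l ∧ routeEnd u l = u ∧ routeWeight l = n}

/-- `g` is the greatest common divisor of the set `S ⊆ ℤ` (with the convention
`gcd ∅ = 0`). -/
def IsSetGcd (S : Set ℤ) (g : ℤ) : Prop :=
  0 ≤ g ∧ (∀ n ∈ S, g ∣ n) ∧ ∀ d : ℤ, (∀ n ∈ S, d ∣ n) → d ∣ g

/-- Weak connectedness: any two vertices are joined by a route. -/
def WeaklyConnected {V : Type*} (E : V → V → Prop) : Prop :=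
  ∀ u v : V, ∃ l : List (ℤ × V), IsRoute E u l ∧ routeEnd u l = v

/-- Arc relation of the directed cycle `Cₙ` on `ZMod n`. -/
def cycleRel (n : ℕ) : ZMod n → ZMod n → Prop := fun i j => j = i + 1

/-- Arc relation of the directed path with vertex set `Fin n`. -/
def pathRel (n : ℕ) : Fin n → Fin n → Prop := fun i j => (i : ℕ) + 1 = (j : ℕ)

/-!
In a weakly connected digraph all of whose closed routes have weight `0`, the weight of a
route from a fixed base vertex to `q` depends only on `q`; this gives a potential `f : V → ℤ`
with `f v = f u + 1` along every arc, and the weight of any route is the difference of `f`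
between its ends. Hence the diameter is `max f - min f`, and `q ↦ f q - min f` is a
homomorphism onto the path on `0, …, d`, surjective because `f` moves by `±1` along each
step of a route. A homomorphism onto the path is itself a potential, so it differs from `f`
by a constant, which surjectivity onto `0` pins down.
-/

section Routes

variable {V : Type*} {E : V → V → Prop}

theorem isRoute_append {u : V} {l₁ l₂ : List (ℤ × V)} :
    IsRoute E u (l₁ ++ l₂) ↔ IsRoute E u l₁ ∧ IsRoute E (routeEnd u l₁) l₂ := by
  induction l₁ generalizing u with
  | nil => simp [IsRoute, routeEnd]
  | cons step t ih => simp [IsRoute, routeEnd, ih, and_assoc]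

theorem routeEnd_append (u : V) (l₁ l₂ : List (ℤ × V)) :
    routeEnd u (l₁ ++ l₂) = routeEnd (routeEnd u l₁) l₂ := by
  induction l₁ generalizing u with
  | nil => rfl
  | cons step t ih => exact ih step.2

theorem routeWeight_append (l₁ l₂ : List (ℤ × V)) :
    routeWeight (l₁ ++ l₂) = routeWeight l₁ + routeWeight l₂ := by
  simp [routeWeight]

theorem routeEnd_cons (u : V) (s : ℤ) (w : V) (l : List (ℤ × V)) :
    routeEnd u ((s, w) :: l) = routeEnd w l := rfl

theorem routeWeight_cons (s : ℤ) (w : V) (l : List (ℤ × V)) :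
    routeWeight ((s, w) :: l) = s + routeWeight l := by
  simp [routeWeight]

/-- The route traversed backwards, from `routeEnd u l` to `u`. -/
def routeReverse : V → List (ℤ × V) → List (ℤ × V)
  | _, [] => []
  | u, (s, w) :: t => routeReverse w t ++ [(-s, u)]

theorem routeEnd_routeReverse (u : V) (l : List (ℤ × V)) :
    routeEnd (routeEnd u l) (routeReverse u l) = u := by
  induction l generalizing u with
  | nil => rfl
  | cons step t ih =>
    obtain ⟨s, w⟩ := step
    rw [routeReverse, routeEnd_append, routeEnd_cons u, ih]
    rfl

theorem IsRoute.reverse {u : V} {l : List (ℤ × V)} (hl : IsRoute E u l) :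
    IsRoute E (routeEnd u l) (routeReverse u l) := by
  induction l generalizing u with
  | nil => trivial
  | cons step t ih =>
    obtain ⟨s, w⟩ := step
    obtain ⟨hstep, ht⟩ := hl
    refine isRoute_append.2 ⟨ih ht, ?_⟩
    rw [routeEnd_cons, routeEnd_routeReverse]
    refine ⟨?_, trivial⟩
    rcases hstep with ⟨rfl, h⟩ | ⟨rfl, h⟩
    · exact Or.inr ⟨rfl, h⟩
    · exact Or.inl ⟨neg_neg 1, h⟩

theorem routeWeight_routeReverse (u : V) (l : List (ℤ × V)) :
    routeWeight (routeReverse u l) = -routeWeight l := by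
  induction l generalizing u with
  | nil => rfl
  | cons step t ih =>
    obtain ⟨s, w⟩ := step
    simp only [routeReverse, routeWeight_append, ih, routeWeight_cons]
    simp [routeWeight]

end Routes

section Potential

variable {V : Type*} {E : V → V → Prop} {f g : V → ℤ}

/-- A homomorphism onto the two-way infinite path on `ℤ`. -/
def IsPotential (E : V → V → Prop) (f : V → ℤ) : Prop :=
  ∀ u v, E u v → f v = f u + 1

theorem IsPotential.apply_step (hf : IsPotential E f) {u w : V} {s : ℤ}
    (hstep : (s = 1 ∧ E u w) ∨ (s = -1 ∧ E w u)) : f w = f u + s := by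
  rcases hstep with ⟨rfl, h⟩ | ⟨rfl, h⟩
  · exact hf u w h
  · linarith [hf w u h]

theorem IsPotential.apply_routeEnd (hf : IsPotential E f) {u : V} {l : List (ℤ × V)}
    (hl : IsRoute E u l) : f (routeEnd u l) = f u + routeWeight l := by
  induction l generalizing u with
  | nil => simp [routeEnd, routeWeight]
  | cons step t ih =>
    obtain ⟨s, w⟩ := step
    obtain ⟨hstep, ht⟩ := hl
    rw [routeWeight_cons, routeEnd_cons, ih ht,
      hf.apply_step hstep]
    ring

theorem isDigraphHom_pathRel_iff {n : ℕ} {φ : V → Fin n} :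
    IsDigraphHom E (pathRel n) φ ↔ IsPotential E (fun v => ((φ v : ℕ) : ℤ)) := by
  simp only [IsDigraphHom, IsPotential, pathRel]
  exact forall₂_congr fun u v => imp_congr_right fun _ => by omega

theorem exists_isPotential (hconn : WeaklyConnected E)
    (hzero : ∀ (u : V) (l : List (ℤ × V)),
      IsRoute E u l → routeEnd u l = u → routeWeight l = 0)
    (b : V) : ∃ f : V → ℤ, IsPotential E f := by
  choose L hL hLend using hconn b
  refine ⟨fun q => routeWeight (L q), fun u v huv => ?_⟩
  -- go from `b` to `u`, cross the arc to `v`, and return to `b` along `L v` reversed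
  let loop := L u ++ (1, v) :: routeReverse b (L v)
  have hloop : IsRoute E b loop := by
    refine isRoute_append.2 ⟨hL u, ?_⟩
    rw [hLend u]
    refine ⟨Or.inl ⟨rfl, huv⟩, ?_⟩
    simpa only [hLend v] using (hL v).reverse
  have hclosed : routeEnd b loop = b := by
    rw [routeEnd_append, hLend u, routeEnd_cons]
    simpa only [hLend v] using routeEnd_routeReverse b (L v)
  have := hzero b loop hloop hclosed
  rw [routeWeight_append, routeWeight_cons, routeWeight_routeReverse] at this
  linarith

theorem IsPotential.sub_eq_sub (hf : IsPotential E f) (hg : IsPotential E g)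
    (hconn : WeaklyConnected E) (u v : V) : g v - f v = g u - f u := by
  obtain ⟨l, hl, rfl⟩ := hconn u v
  rw [hf.apply_routeEnd hl, hg.apply_routeEnd hl]
  ring

theorem IsPotential.exists_apply_eq (hf : IsPotential E f) {u : V} {l : List (ℤ × V)}
    (hl : IsRoute E u l) {k : ℤ} (hu : f u ≤ k) (hend : k ≤ f (routeEnd u l)) :
    ∃ q, f q = k := by
  induction l generalizing u with
  | nil => exact ⟨u, le_antisymm hu hend⟩
  | cons step t ih =>
    obtain ⟨s, w⟩ := step
    obtain ⟨hstep, ht⟩ := hl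
    rcases hu.eq_or_lt with rfl | hlt
    · exact ⟨u, rfl⟩
    · have hw := hf.apply_step hstep
      have hs : s ≤ 1 := by rcases hstep with ⟨rfl, -⟩ | ⟨rfl, -⟩ <;> norm_num
      exact ih ht (by omega) hend

theorem IsPotential.routeWeights_eq (hf : IsPotential E f) (hconn : WeaklyConnected E) :
    {n : ℤ | ∃ (u : V) (l : List (ℤ × V)), IsRoute E u l ∧ routeWeight l = n} =
      {n : ℤ | ∃ u v, f v - f u = n} := by
  ext n
  constructor
  · rintro ⟨u, l, hl, rfl⟩
    exact ⟨u, routeEnd u l, by rw [hf.apply_routeEnd hl]; ring⟩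
  · rintro ⟨u, v, rfl⟩
    obtain ⟨l, hl, rfl⟩ := hconn u v
    exact ⟨u, l, hl, by rw [hf.apply_routeEnd hl]; ring⟩

end Potential

/-- for a finite weakly connected digraph in which every closed route
has weight `0`, there is a unique epimorphism onto the directed path whose length
is the diameter `d(G)` (the maximal route weight); it is given by
`q ↦ σ(R(p,q))` for a suitable base vertex `p`, independently of the chosen
route. -/
theorem exists_unique_epimorphism_onto_path {V : Type*} [Fintype V] [Nonempty V]
    (E : V → V → Prop) (hconn : WeaklyConnected E)
    (hzero : ∀ (u : V) (l : List (ℤ × V)),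
      IsRoute E u l → routeEnd u l = u → routeWeight l = 0)
    (d : ℕ)
    (hd : IsGreatest {n : ℤ | ∃ (u : V) (l : List (ℤ × V)),
      IsRoute E u l ∧ routeWeight l = n} (d : ℤ)) :
    ∃ (p : V) (φ : V → Fin (d + 1)),
      (∀ (q : V) (l : List (ℤ × V)), IsRoute E p l → routeEnd p l = q →
        ((φ q : ℕ) : ℤ) = routeWeight l) ∧
      IsDigraphHom E (pathRel (d + 1)) φ ∧ Function.Surjective φ ∧
      ∀ φ' : V → Fin (d + 1),
        IsDigraphHom E (pathRel (d + 1)) φ' → Function.Surjective φ' → φ' = φ := by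
  obtain ⟨f, hf⟩ := exists_isPotential hconn hzero (Classical.arbitrary V)
  obtain ⟨p, hp⟩ := Finite.exists_min f
  rw [hf.routeWeights_eq hconn] at hd
  obtain ⟨⟨u, v, huv⟩, hdmax⟩ := hd
  have hle (q : V) : f q - f p ≤ d := hdmax ⟨p, q, rfl⟩
  have htop : f v - f p = d := le_antisymm (hle v) (by linarith [hp u])
  let φ (q : V) : Fin (d + 1) := ⟨(f q - f p).toNat, by have := hp q; have := hle q; omega⟩
  have hφ (q : V) : ((φ q : ℕ) : ℤ) = f q - f p := Int.toNat_of_nonneg (sub_nonneg.2 (hp q))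
  have hφpot : IsPotential E fun q => ((φ q : ℕ) : ℤ) := fun a b hab => by
    simp only [hφ, hf a b hab]; ring
  refine ⟨p, φ, fun q l hl hend => ?_, isDigraphHom_pathRel_iff.2 hφpot, fun k => ?_,
    fun φ' hφ' hsurj => ?_⟩
  · rw [hφ, ← hend, hf.apply_routeEnd hl]; ring
  · obtain ⟨l, hl, hend⟩ := hconn p v
    obtain ⟨q, hq⟩ := hφpot.exists_apply_eq hl (k := (k : ℕ))
      (by rw [hφ]; omega) (by rw [hend, hφ]; omega)
    exact ⟨q, Fin.ext (by exact_mod_cast hq)⟩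
  · have hdiff := hφpot.sub_eq_sub (isDigraphHom_pathRel_iff.1 hφ') hconn p
    obtain ⟨q₀, hq₀⟩ := hsurj 0
    have hp₀ : ((φ' p : ℕ) : ℤ) = 0 := by
      have := hdiff q₀
      rw [hq₀, Fin.val_zero, hφ p] at this
      omega
    funext q
    exact Fin.ext (by have := hdiff q; rw [hp₀, hφ p] at this; omega)
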